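/- arXiv:2301.04350 — 2 statements merged into one kernel-verified Lean document; each statement's English description precedes it below -/
import Mathlib

section
/- Consider the set A = {a_1, ..., a_n} of positive integers with sum s, and the RMCMD instance with disks d_1 of radius 2s centered at the origin, d_2 of radius 2s centered at (3s, 0), d_3 of radius s centered at (0, 5s/2 + e), d_4 of radius s centered at (3s, 5s/2 + e) for some 0 < e < 1, and for each a_i a disk of radius a_i centered at (3s/2, 0). If A has a subset X with sum s/2, then assigning each disk corresponding to a member of X to d_1 and each remaining small disk to d_2 yields an assignment in which d_1, d_2, d_3, d_4 are selected, the aggregate radii of d_1 and d_2 are both 5s/2, and no selected disk contains the center of another selected disk (with respect to aggregate radii). -/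
open scoped Classical

noncomputable section

/-- Points of the plane. -/
abbrev Pt := EuclideanSpace ℝ (Fin 2)

/-- The aggregate radius of a disk `i` under an assignment `φ`:
the sum of the radii of all disks assigned to `i`. -/
def aggRadius {α : Type*} [Fintype α] (r : α → ℝ) (φ : α → α) (i : α) : ℝ :=
  ∑ j ∈ Finset.univ.filter (fun j => φ j = i), r j

/-! Only the four large disks are selected, and the small disks at `(3s/2, 0)` split their
radii `s/2 + s/2` between `d_1` and `d_2`, raising both aggregate radii to `5s/2`. Since `e ≥ 0`,
each pair of selected centres differs in one coordinate by at least `5s/2` (pairs involving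
`d_1` or `d_2`) or by `3s` (the pair `d_3`, `d_4`). -/

open Finset

section Merge

variable {α β : Type*} {φ : α ⊕ β → α ⊕ β} {g : β → α}

theorem aggRadius_inl_of_merge [Fintype α] [Fintype β] (r : α ⊕ β → ℝ)
    (hφl : ∀ k, φ (.inl k) = .inl k) (hφr : ∀ i, φ (.inr i) = .inl (g i)) (k : α) :
    aggRadius r φ (.inl k) = r (.inl k) + ∑ i with g i = k, r (.inr i) := by
  simp only [aggRadius, sum_filter, Fintype.sum_sum_type, hφl, hφr, Sum.inl.injEq,
    sum_ite_eq', mem_univ, if_true]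

theorem apply_apply_of_merge (hφl : ∀ k, φ (.inl k) = .inl k)
    (hφr : ∀ i, φ (.inr i) = .inl (g i)) (d : α ⊕ β) : φ (φ d) = φ d := by
  rcases d with k | i
  · rw [hφl, hφl]
  · rw [hφr, hφl]

theorem exists_inl_of_merge_apply_eq_self (hφr : ∀ i, φ (.inr i) = .inl (g i))
    {d : α ⊕ β} (hd : φ d = d) : ∃ k, d = .inl k := by
  rcases d with k | i
  · exact ⟨k, rfl⟩
  · exact absurd (hd.symm.trans (hφr i)) Sum.inr_ne_inl

end Merge

theorem le_dist_of_le_abs_sub {ι : Type*} [Fintype ι] {x y : EuclideanSpace ℝ ι} {R : ℝ}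
    (i : ι) (h : R ≤ |x i - y i|) : R ≤ dist x y :=
  h.trans (PiLp.dist_apply_le x y i)

theorem four_disks_centre_disjoint {s e : ℝ} (hs : 0 ≤ s) (he : 0 ≤ e) {k k' : Fin 4}
    (hne : k ≠ k') :
    ![5 * s / 2, 5 * s / 2, s, s] k ≤
      dist (![!₂[0, 0], !₂[3 * s, 0], !₂[0, 5 * s / 2 + e], !₂[3 * s, 5 * s / 2 + e]] k : Pt)
        (![!₂[0, 0], !₂[3 * s, 0], !₂[0, 5 * s / 2 + e], !₂[3 * s, 5 * s / 2 + e]] k') := by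
  fin_cases k <;> fin_cases k' <;> first
    | exact absurd rfl hne
    | (refine le_dist_of_le_abs_sub 0 (le_abs.2 ?_)
       simp only [Fin.reduceFinMk, Fin.zero_eta, Fin.mk_one, Fin.isValue, Matrix.cons_val,
         Matrix.cons_val_zero, Matrix.cons_val_one, sub_zero, zero_sub]
       first | (left; linarith) | (right; linarith))
    | (refine le_dist_of_le_abs_sub 1 (le_abs.2 ?_)
       simp only [Fin.reduceFinMk, Fin.zero_eta, Fin.mk_one, Fin.isValue, Matrix.cons_val,
         Matrix.cons_val_zero, Matrix.cons_val_one, sub_zero, zero_sub]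
       first | (left; linarith) | (right; linarith))

theorem partition_to_RMCMD_forward_general {n : ℕ} (a : Fin n → ℝ) (ha : ∀ i, 0 < a i)
    (e : ℝ) (he0 : 0 < e) (X : Finset (Fin n))
    (hX : ∑ i ∈ X, a i = (∑ i, a i) / 2) :
    let s : ℝ := ∑ i, a i
    let p : Fin 4 ⊕ Fin n → Pt := Sum.elim
      ![!₂[0, 0], !₂[3 * s, 0], !₂[0, 5 * s / 2 + e], !₂[3 * s, 5 * s / 2 + e]]
      (fun _ => !₂[3 * s / 2, 0])
    let r : Fin 4 ⊕ Fin n → ℝ := Sum.elim ![2 * s, 2 * s, s, s] a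
    let φ : Fin 4 ⊕ Fin n → Fin 4 ⊕ Fin n := Sum.elim
      (fun k => Sum.inl k)
      (fun i => if i ∈ X then Sum.inl 0 else Sum.inl 1)
    -- φ is an assignment
    (∀ d, φ (φ d) = φ d) ∧
    -- d_1, d_2, d_3, d_4 are selected
    (∀ k : Fin 4, φ (Sum.inl k) = Sum.inl k) ∧
    -- the aggregate radii of d_1 and d_2 are both 5s/2
    aggRadius r φ (Sum.inl 0) = 5 * s / 2 ∧
    aggRadius r φ (Sum.inl 1) = 5 * s / 2 ∧
    -- no selected disk contains the centre of another selected disk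
    -- (with respect to aggregate radii)
    (∀ d d', φ d = d → φ d' = d' → d ≠ d' →
      aggRadius r φ d ≤ dist (p d) (p d')) := by
  intro s p r φ
  have hs : 0 ≤ s := sum_nonneg fun i _ => (ha i).le
  have hX' : ∑ i ∈ X, a i = s / 2 := hX
  have hXc : ∑ i with i ∉ X, a i = s / 2 := by
    have := sum_filter_add_sum_filter_not univ (· ∈ X) a
    rw [filter_univ_mem] at this
    linarith
  have hφl : ∀ k, φ (.inl k) = .inl k := fun _ => rfl
  have hφr : ∀ i, φ (.inr i) = .inl (if i ∈ X then 0 else 1) := fun i => (apply_ite _ _ _ _).symm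
  have hR : ∀ k, aggRadius r φ (.inl k) = ![5 * s / 2, 5 * s / 2, s, s] k := by
    intro k
    rw [aggRadius_inl_of_merge r hφl hφr]
    fin_cases k <;> simp [r, hX', hXc, ite_eq_iff] <;> ring
  refine ⟨apply_apply_of_merge hφl hφr, hφl, hR 0, hR 1, ?_⟩
  intro d d' hd hd' hne
  obtain ⟨k, rfl⟩ := exists_inl_of_merge_apply_eq_self hφr hd
  obtain ⟨k', rfl⟩ := exists_inl_of_merge_apply_eq_self hφr hd'
  rw [hR]
  exact four_disks_centre_disjoint hs he0.le (ne_of_apply_ne Sum.inl hne)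

/-- Partition-to-RMCMD construction, forward direction.  Given positive reals
`a_1, …, a_n` with sum `s`, the RMCMD instance consists of `d_1` of radius `2s` at the
origin, `d_2` of radius `2s` at `(3s, 0)`, `d_3` of radius `s` at `(0, 5s/2 + e)`,
`d_4` of radius `s` at `(3s, 5s/2 + e)` (with `0 < e < 1`), and for each `a_i` a small
disk of radius `a_i` at `(3s/2, 0)`.  If `X ⊆ A` has sum `s/2`, then assigning each
small disk with index in `X` to `d_1` and the rest to `d_2` (and fixing `d_1,…,d_4`)
yields an assignment in which `d_1, d_2, d_3, d_4` are selected, the aggregate radii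
of `d_1` and `d_2` are both `5s/2`, and no selected disk contains the centre of
another selected disk with respect to aggregate radii. -/
theorem partition_to_RMCMD_forward {n : ℕ} (a : Fin n → ℝ) (ha : ∀ i, 0 < a i)
    (e : ℝ) (he0 : 0 < e) (he1 : e < 1) (X : Finset (Fin n))
    (hX : ∑ i ∈ X, a i = (∑ i, a i) / 2) :
    let s : ℝ := ∑ i, a i
    let p : Fin 4 ⊕ Fin n → Pt := Sum.elim
      ![!₂[0, 0], !₂[3 * s, 0], !₂[0, 5 * s / 2 + e], !₂[3 * s, 5 * s / 2 + e]]
      (fun _ => !₂[3 * s / 2, 0])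
    let r : Fin 4 ⊕ Fin n → ℝ := Sum.elim ![2 * s, 2 * s, s, s] a
    let φ : Fin 4 ⊕ Fin n → Fin 4 ⊕ Fin n := Sum.elim
      (fun k => Sum.inl k)
      (fun i => if i ∈ X then Sum.inl 0 else Sum.inl 1)
    -- φ is an assignment
    (∀ d, φ (φ d) = φ d) ∧
    -- d_1, d_2, d_3, d_4 are selected
    (∀ k : Fin 4, φ (Sum.inl k) = Sum.inl k) ∧
    -- the aggregate radii of d_1 and d_2 are both 5s/2
    aggRadius r φ (Sum.inl 0) = 5 * s / 2 ∧
    aggRadius r φ (Sum.inl 1) = 5 * s / 2 ∧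
    -- no selected disk contains the centre of another selected disk
    -- (with respect to aggregate radii)
    (∀ d d', φ d = d → φ d' = d' → d ≠ d' →
      aggRadius r φ d ≤ dist (p d) (p d')) :=
  partition_to_RMCMD_forward_general a ha e he0 X hX

end
end

section
/- For every planar bipartite incidence structure of a Monotone 3-SAT instance with v variables and c clauses admitting a monotone rectilinear representation, there exists such a representation on an integer grid with c + 1 rows and 3c + v columns, in which all horizontal segments lie on horizontal grid lines and all vertical segments lie on vertical grid lines. -/
/-- A monotone rectilinear representation of a Planar Monotone 3-SAT instance with
variables `Fin v` and clauses `Fin c`, where `pos j` tells whether clause `j` is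
positive and `occ j` is the set of variables occurring in clause `j`.
Variables are disjoint horizontal segments `[vl i, vr i]` on the x-axis, positive
clauses are horizontal segments `[cl j, cr j]` at height `cy j > 0`, negative
clauses at height `cy j < 0`, and each clause is connected to each of its variables
by a vertical segment at x-coordinate `ex j i`; the drawing is crossing-free. -/
structure MonRectRep (v c : ℕ) (pos : Fin c → Bool) (occ : Fin c → Finset (Fin v)) where
  vl : Fin v → ℝ
  vr : Fin v → ℝ
  cy : Fin c → ℝ
  cl : Fin c → ℝ
  cr : Fin c → ℝ
  ex : Fin c → Fin v → ℝ
  hvlr : ∀ i, vl i ≤ vr i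
  hclr : ∀ j, cl j ≤ cr j
  /-- positive clauses are drawn above the x-axis -/
  hposy : ∀ j, pos j = true → 0 < cy j
  /-- negative clauses are drawn below the x-axis -/
  hnegy : ∀ j, pos j = false → cy j < 0
  /-- variable segments are disjoint -/
  hvdisj : ∀ i i', i ≠ i' → vr i < vl i' ∨ vr i' < vl i
  /-- clause segments on the same line are disjoint -/
  hcdisj : ∀ j j', j ≠ j' → cy j = cy j' → cr j < cl j' ∨ cr j' < cl j
  /-- each edge meets its variable segment -/
  hexv : ∀ j i, i ∈ occ j → vl i ≤ ex j i ∧ ex j i ≤ vr i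
  /-- each edge meets its clause segment -/
  hexc : ∀ j i, i ∈ occ j → cl j ≤ ex j i ∧ ex j i ≤ cr j
  /-- edges do not cross other variable segments -/
  hedgevar : ∀ j i, i ∈ occ j → ∀ i', i' ≠ i → ¬ (vl i' ≤ ex j i ∧ ex j i ≤ vr i')
  /-- edges do not cross clause segments lying strictly between the x-axis and
  their own clause segment -/
  hedgeclause : ∀ j i, i ∈ occ j → ∀ j', j' ≠ j → pos j' = pos j →
    |cy j'| < |cy j| → ¬ (cl j' ≤ ex j i ∧ ex j i ≤ cr j')
  /-- edges of distinct clauses on the same side of the x-axis are on distinct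
  vertical lines -/
  hedgeedge : ∀ j i j' i', i ∈ occ j → i' ∈ occ j' → j ≠ j' → pos j = pos j' →
    ex j i ≠ ex j' i'
  /-- distinct edges of the same clause are on distinct vertical lines -/
  hedgeedge' : ∀ j i i', i ∈ occ j → i' ∈ occ j → i ≠ i' → ex j i ≠ ex j i'

namespace MonRectRepAux

open scoped Classical

variable {v c : ℕ} {pos : Fin c → Bool} {occ : Fin c → Finset (Fin v)}
variable (R : MonRectRep v c pos occ)

/-- the edge x-coordinates touching variable `i` -/
noncomputable def Ev (i : Fin v) : Finset ℝ :=
  (Finset.univ.filter (fun j => i ∈ occ j)).image (fun j => R.ex j i)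

lemma mem_Ev {i : Fin v} {j : Fin c} (hj : i ∈ occ j) : R.ex j i ∈ Ev R i :=
  Finset.mem_image.2 ⟨j, Finset.mem_filter.2 ⟨Finset.mem_univ _, hj⟩, rfl⟩

lemma Ev_sub {i : Fin v} {x : ℝ} (hx : x ∈ Ev R i) : R.vl i ≤ x ∧ x ≤ R.vr i := by
  rcases Finset.mem_image.1 hx with ⟨j, hj, rfl⟩
  exact R.hexv j i (Finset.mem_filter.1 hj).2

noncomputable def vl2 (i : Fin v) : ℝ :=
  if h : (Ev R i).Nonempty then (Ev R i).min' h else R.vl i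

noncomputable def vr2 (i : Fin v) : ℝ :=
  if h : (Ev R i).Nonempty then (Ev R i).max' h else R.vl i

noncomputable def cl2 (j : Fin c) : ℝ :=
  if h : (occ j).Nonempty then ((occ j).image (R.ex j)).min' (h.image _) else R.cl j

noncomputable def cr2 (j : Fin c) : ℝ :=
  if h : (occ j).Nonempty then ((occ j).image (R.ex j)).max' (h.image _) else R.cl j

lemma vl2_le_vr2 (i : Fin v) : vl2 R i ≤ vr2 R i := by
  unfold vl2 vr2; split
  · exact Finset.min'_le _ _ (Finset.max'_mem _ _)
  · exact le_rfl

lemma vl_le_vl2 (i : Fin v) : R.vl i ≤ vl2 R i := by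
  unfold vl2; split
  · exact (Ev_sub R (Finset.min'_mem _ _)).1
  · exact le_rfl

lemma vr2_le_vr (i : Fin v) : vr2 R i ≤ R.vr i := by
  unfold vr2; split
  · exact (Ev_sub R (Finset.max'_mem _ _)).2
  · exact R.hvlr i

lemma vl2_le_ex {i : Fin v} {j : Fin c} (hj : i ∈ occ j) :
    vl2 R i ≤ R.ex j i ∧ R.ex j i ≤ vr2 R i := by
  have hne : (Ev R i).Nonempty := ⟨_, mem_Ev R hj⟩
  constructor
  · unfold vl2; rw [dif_pos hne]; exact Finset.min'_le _ _ (mem_Ev R hj)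
  · unfold vr2; rw [dif_pos hne]; exact Finset.le_max' _ _ (mem_Ev R hj)

lemma cl_le_cl2 (j : Fin c) : R.cl j ≤ cl2 R j := by
  unfold cl2; split
  case isTrue h =>
    rcases Finset.mem_image.1 (Finset.min'_mem ((occ j).image (R.ex j)) (h.image _)) with ⟨i, hi, he⟩
    rw [← he]; exact (R.hexc j i hi).1
  case isFalse => exact le_rfl

lemma cr2_le_cr (j : Fin c) : cr2 R j ≤ R.cr j := by
  unfold cr2; split
  case isTrue h =>
    rcases Finset.mem_image.1 (Finset.max'_mem ((occ j).image (R.ex j)) (h.image _)) with ⟨i, hi, he⟩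
    rw [← he]; exact (R.hexc j i hi).2
  case isFalse => exact R.hclr j

lemma cl2_le_cr2 (j : Fin c) : cl2 R j ≤ cr2 R j := by
  unfold cl2 cr2; split
  · exact Finset.min'_le _ _ (Finset.max'_mem _ _)
  · exact le_rfl

lemma cl2_le_ex {i : Fin v} {j : Fin c} (hj : i ∈ occ j) :
    cl2 R j ≤ R.ex j i ∧ R.ex j i ≤ cr2 R j := by
  have hne : (occ j).Nonempty := ⟨i, hj⟩
  have hmem : R.ex j i ∈ (occ j).image (R.ex j) := Finset.mem_image_of_mem _ hj
  constructor
  · unfold cl2; rw [dif_pos hne]; exact Finset.min'_le _ _ hmem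
  · unfold cr2; rw [dif_pos hne]; exact Finset.le_max' _ _ hmem

/-- the column set -/
noncomputable def X : Finset ℝ :=
  (Finset.univ.biUnion (fun j : Fin c =>
    insert (cl2 R j) (insert (cr2 R j) ((occ j).image (R.ex j))))) ∪
  Finset.univ.image (vl2 R)

lemma ex_mem_X {i : Fin v} {j : Fin c} (hj : i ∈ occ j) : R.ex j i ∈ X R := by
  refine Finset.mem_union_left _ (Finset.mem_biUnion.2 ⟨j, Finset.mem_univ _, ?_⟩)
  exact Finset.mem_insert_of_mem (Finset.mem_insert_of_mem (Finset.mem_image_of_mem _ hj))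

lemma cl2_mem_X (j : Fin c) : cl2 R j ∈ X R :=
  Finset.mem_union_left _ (Finset.mem_biUnion.2 ⟨j, Finset.mem_univ _, Finset.mem_insert_self _ _⟩)

lemma cr2_mem_X (j : Fin c) : cr2 R j ∈ X R :=
  Finset.mem_union_left _ (Finset.mem_biUnion.2 ⟨j, Finset.mem_univ _,
    Finset.mem_insert_of_mem (Finset.mem_insert_self _ _)⟩)

lemma vl2_mem_X (i : Fin v) : vl2 R i ∈ X R :=
  Finset.mem_union_right _ (Finset.mem_image_of_mem _ (Finset.mem_univ i))

lemma vr2_mem_X (i : Fin v) : vr2 R i ∈ X R := by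
  unfold vr2; split
  case isTrue h =>
    rcases Finset.mem_image.1 (Finset.max'_mem (Ev R i) h) with ⟨j, hj, he⟩
    rw [← he]; exact ex_mem_X R (Finset.mem_filter.1 hj).2
  case isFalse h =>
    have : vl2 R i = R.vl i := by unfold vl2; rw [dif_neg h]
    rw [← this]; exact vl2_mem_X R i

lemma card_X (hocc : ∀ j, (occ j).card ≤ 3) : (X R).card ≤ 3 * c + v := by
  refine le_trans (Finset.card_union_le _ _) ?_
  have h1 : (Finset.univ.biUnion (fun j : Fin c =>
      insert (cl2 R j) (insert (cr2 R j) ((occ j).image (R.ex j))))).card ≤ 3 * c := by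
    refine le_trans (Finset.card_biUnion_le) ?_
    calc ∑ j : Fin c, (insert (cl2 R j) (insert (cr2 R j) ((occ j).image (R.ex j)))).card
        ≤ ∑ _j : Fin c, 3 := by
          refine Finset.sum_le_sum (fun j _ => ?_)
          by_cases h : (occ j).Nonempty
          · have h1 : cl2 R j ∈ (occ j).image (R.ex j) := by
              unfold cl2; rw [dif_pos h]; exact Finset.min'_mem _ _
            have h2 : cr2 R j ∈ (occ j).image (R.ex j) := by
              unfold cr2; rw [dif_pos h]; exact Finset.max'_mem _ _
            rw [Finset.insert_eq_self.2 (Finset.mem_insert_of_mem h1),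
              Finset.insert_eq_self.2 h2]
            exact le_trans (Finset.card_image_le) (hocc j)
          · rw [Finset.not_nonempty_iff_eq_empty.1 h]
            simp only [Finset.image_empty]
            exact le_trans (Finset.card_insert_le _ _)
              (by simpa using Nat.succ_le_succ (Finset.card_insert_le _ _))
      _ = 3 * c := by simp [mul_comm]
  have h2 : (Finset.univ.image (vl2 R)).card ≤ v := by
    simpa using Finset.card_image_le (s := (Finset.univ : Finset (Fin v))) (f := vl2 R)
  omega

/-- rank of x among columns -/
noncomputable def sig (x : ℝ) : ℤ := (((X R).filter (fun z => z < x)).card : ℤ)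

lemma sig_mono {x y : ℝ} (hxy : x ≤ y) : sig R x ≤ sig R y := by
  unfold sig
  have hs : ((X R).filter (fun z => z < x)) ⊆ ((X R).filter (fun z => z < y)) := by
    intro z hz
    rw [Finset.mem_filter] at hz ⊢
    exact ⟨hz.1, lt_of_lt_of_le hz.2 hxy⟩
  exact_mod_cast Finset.card_le_card hs

lemma sig_strict {x y : ℝ} (hx : x ∈ X R) (hxy : x < y) : sig R x < sig R y := by
  unfold sig
  have hs : ((X R).filter (fun z => z < x)) ⊆ ((X R).filter (fun z => z < y)) := by
    intro z hz
    rw [Finset.mem_filter] at hz ⊢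
    exact ⟨hz.1, lt_trans hz.2 hxy⟩
  have : ((X R).filter (fun z => z < x)) ⊂ ((X R).filter (fun z => z < y)) :=
    (Finset.ssubset_iff_of_subset hs).2 ⟨x, Finset.mem_filter.2 ⟨hx, hxy⟩, by simp⟩
  exact_mod_cast Finset.card_lt_card this

lemma sig_nonneg (x : ℝ) : 0 ≤ sig R x := Int.ofNat_nonneg _

lemma sig_lt (hocc : ∀ j, (occ j).card ≤ 3) {x : ℝ} (hx : x ∈ X R) :
    sig R x < 3 * (c : ℤ) + v := by
  have h1 : ((X R).filter (fun z => z < x)).card < (X R).card := by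
    refine Finset.card_lt_card (Finset.ssubset_iff_of_subset (Finset.filter_subset _ _) |>.2
      ⟨x, hx, by simp⟩)
  have := card_X R hocc
  unfold sig; exact_mod_cast lt_of_lt_of_le h1 (by exact_mod_cast this)

lemma sig_inj {x y : ℝ} (hx : x ∈ X R) (hy : y ∈ X R) (h : sig R x = sig R y) : x = y := by
  rcases lt_trichotomy x y with hlt | he | hlt
  · exact absurd h (ne_of_lt (sig_strict R hx hlt))
  · exact he
  · exact absurd h.symm (ne_of_lt (sig_strict R hy hlt))

lemma sig_not_between {a b x : ℝ} (hb : b ∈ X R) (hx : x ∈ X R) (h : ¬ (a ≤ x ∧ x ≤ b)) :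
    ¬ ((sig R a : ℝ) ≤ (sig R x : ℝ) ∧ (sig R x : ℝ) ≤ (sig R b : ℝ)) := by
  rintro ⟨h1, h2⟩
  apply h
  constructor
  · by_contra hlt
    push_neg at hlt
    exact absurd h1 (not_le.2 (by exact_mod_cast sig_strict R hx hlt))
  · by_contra hlt
    push_neg at hlt
    exact absurd h2 (not_le.2 (by exact_mod_cast sig_strict R hb hlt))


noncomputable def Yp (cy : Fin c → ℝ) : Finset ℝ :=
  (Finset.univ.image cy).filter (fun z => 0 < z)
noncomputable def Yn (cy : Fin c → ℝ) : Finset ℝ :=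
  (Finset.univ.image cy).filter (fun z => z < 0)

noncomputable def tau (cy : Fin c → ℝ) (y : ℝ) : ℤ :=
  if 0 < y then (((Yp cy).filter (fun z => z < y)).card : ℤ) + 1
  else if y < 0 then -((((Yn cy).filter (fun z => y < z)).card : ℤ) + 1) else 0

variable {cy : Fin c → ℝ}

lemma tau_pos {y : ℝ} (hy : 0 < y) : 0 < tau cy y := by
  unfold tau; rw [if_pos hy]; positivity

lemma tau_neg {y : ℝ} (hy : y < 0) : tau cy y < 0 := by
  unfold tau; rw [if_neg (by linarith), if_pos hy]
  have : (0:ℤ) ≤ (((Yn cy).filter (fun z => y < z)).card : ℤ) := Int.ofNat_nonneg _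
  linarith

lemma mem_Yp {j : Fin c} (h : 0 < cy j) : cy j ∈ Yp cy :=
  Finset.mem_filter.2 ⟨Finset.mem_image_of_mem _ (Finset.mem_univ j), h⟩

lemma mem_Yn {j : Fin c} (h : cy j < 0) : cy j ∈ Yn cy :=
  Finset.mem_filter.2 ⟨Finset.mem_image_of_mem _ (Finset.mem_univ j), h⟩

lemma card_Yp : (Yp cy).card ≤ c := by
  refine le_trans (Finset.card_filter_le _ _) (le_trans Finset.card_image_le (by simp))

lemma card_Yn : (Yn cy).card ≤ c := by
  refine le_trans (Finset.card_filter_le _ _) (le_trans Finset.card_image_le (by simp))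

lemma tau_abs_le (j : Fin c) (hne : cy j ≠ 0) : |tau cy (cy j)| ≤ (c : ℤ) := by
  rcases lt_or_gt_of_ne hne with hneg | hpos
  · have h0 : tau cy (cy j) = -((((Yn cy).filter (fun z => cy j < z)).card : ℤ) + 1) := by
      unfold tau; rw [if_neg (by linarith), if_pos hneg]
    have hsub : (Yn cy).filter (fun z => cy j < z) ⊆ (Yn cy).erase (cy j) := by
      intro z hz
      rw [Finset.mem_filter] at hz
      exact Finset.mem_erase.2 ⟨ne_of_gt hz.2, hz.1⟩
    have hcard : ((Yn cy).filter (fun z => cy j < z)).card ≤ (Yn cy).card - 1 :=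
      le_trans (Finset.card_le_card hsub) (le_of_eq (Finset.card_erase_of_mem (mem_Yn hneg)))
    have h1 : 1 ≤ (Yn cy).card := Finset.card_pos.2 ⟨_, mem_Yn hneg⟩
    have h2 := card_Yn (cy := cy)
    rw [h0, abs_neg, abs_of_nonneg (by positivity)]
    omega
  · have h0 : tau cy (cy j) = (((Yp cy).filter (fun z => z < cy j)).card : ℤ) + 1 := by
      unfold tau; rw [if_pos hpos]
    have hsub : (Yp cy).filter (fun z => z < cy j) ⊆ (Yp cy).erase (cy j) := by
      intro z hz
      rw [Finset.mem_filter] at hz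
      exact Finset.mem_erase.2 ⟨ne_of_lt hz.2, hz.1⟩
    have hcard : ((Yp cy).filter (fun z => z < cy j)).card ≤ (Yp cy).card - 1 :=
      le_trans (Finset.card_le_card hsub) (le_of_eq (Finset.card_erase_of_mem (mem_Yp hpos)))
    have h1 : 1 ≤ (Yp cy).card := Finset.card_pos.2 ⟨_, mem_Yp hpos⟩
    have h2 := card_Yp (cy := cy)
    rw [h0, abs_of_nonneg (by positivity)]
    omega

lemma tau_strict_pos {y y' : ℝ} (hy : y ∈ Yp cy) (h : y < y') (hy' : 0 < y) (hy'' : 0 < y') :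
    tau cy y < tau cy y' := by
  unfold tau; rw [if_pos hy', if_pos hy'']
  have hs : (Yp cy).filter (fun z => z < y) ⊂ (Yp cy).filter (fun z => z < y') := by
    refine (Finset.ssubset_iff_of_subset ?_).2 ⟨y, Finset.mem_filter.2 ⟨hy, h⟩, by simp⟩
    intro z hz
    rw [Finset.mem_filter] at hz ⊢
    exact ⟨hz.1, lt_trans hz.2 h⟩
  have := Finset.card_lt_card hs
  omega

lemma tau_strict_neg {y y' : ℝ} (hy' : y' ∈ Yn cy) (h : y < y') (hy0 : y < 0) (hy'0 : y' < 0) :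
    tau cy y < tau cy y' := by
  unfold tau
  rw [if_neg (by linarith), if_pos hy0, if_neg (by linarith), if_pos hy'0]
  have hs : (Yn cy).filter (fun z => y' < z) ⊂ (Yn cy).filter (fun z => y < z) := by
    refine (Finset.ssubset_iff_of_subset ?_).2 ⟨y', Finset.mem_filter.2 ⟨hy', h⟩, by simp⟩
    intro z hz
    rw [Finset.mem_filter] at hz ⊢
    exact ⟨hz.1, lt_trans h hz.2⟩
  have := Finset.card_lt_card hs
  omega

/-- injectivity on clause heights -/
lemma tau_inj {j j' : Fin c} (hj : cy j ≠ 0) (hj' : cy j' ≠ 0)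
    (h : tau cy (cy j) = tau cy (cy j')) : cy j = cy j' := by
  rcases lt_trichotomy (cy j) (cy j') with hlt | he | hlt
  · exfalso
    rcases lt_or_gt_of_ne hj with hn | hp
    · rcases lt_or_gt_of_ne hj' with hn' | hp'
      · exact absurd h (ne_of_lt (tau_strict_neg (mem_Yn hn') hlt hn hn'))
      · have := tau_neg (cy := cy) hn; have := tau_pos (cy := cy) hp'; omega
    · have hp' : 0 < cy j' := lt_trans hp hlt
      exact absurd h (ne_of_lt (tau_strict_pos (mem_Yp hp) hlt hp hp'))
  · exact he
  · exfalso
    rcases lt_or_gt_of_ne hj' with hn' | hp'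
    · rcases lt_or_gt_of_ne hj with hn | hp
      · exact absurd h.symm (ne_of_lt (tau_strict_neg (mem_Yn hn) hlt hn' hn))
      · have := tau_neg (cy := cy) hn'; have := tau_pos (cy := cy) hp; omega
    · have hp : 0 < cy j := lt_trans hp' hlt
      exact absurd h.symm (ne_of_lt (tau_strict_pos (mem_Yp hp') hlt hp' hp))

/-- |tau| is (weakly) monotone in |y| for same-sign clause heights -/
lemma tau_abs_mono {j j' : Fin c} (hsame : (0 < cy j ∧ 0 < cy j') ∨ (cy j < 0 ∧ cy j' < 0))
    (h : |cy j| ≤ |cy j'|) : |tau cy (cy j)| ≤ |tau cy (cy j')| := by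
  rcases hsame with ⟨hp, hp'⟩ | ⟨hn, hn'⟩
  · rw [abs_of_pos hp, abs_of_pos hp'] at h
    have e : tau cy (cy j) = (((Yp cy).filter (fun z => z < cy j)).card : ℤ) + 1 := by
      unfold tau; rw [if_pos hp]
    have e' : tau cy (cy j') = (((Yp cy).filter (fun z => z < cy j')).card : ℤ) + 1 := by
      unfold tau; rw [if_pos hp']
    have hs : (Yp cy).filter (fun z => z < cy j) ⊆ (Yp cy).filter (fun z => z < cy j') := by
      intro z hz
      rw [Finset.mem_filter] at hz ⊢
      exact ⟨hz.1, lt_of_lt_of_le hz.2 h⟩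
    have := Finset.card_le_card hs
    rw [e, e', abs_of_nonneg (by positivity), abs_of_nonneg (by positivity)]
    omega
  · rw [abs_of_neg hn, abs_of_neg hn'] at h
    have h' : cy j' ≤ cy j := by linarith
    have e : tau cy (cy j) = -((((Yn cy).filter (fun z => cy j < z)).card : ℤ) + 1) := by
      unfold tau; rw [if_neg (by linarith), if_pos hn]
    have e' : tau cy (cy j') = -((((Yn cy).filter (fun z => cy j' < z)).card : ℤ) + 1) := by
      unfold tau; rw [if_neg (by linarith), if_pos hn']
    have hs : (Yn cy).filter (fun z => cy j < z) ⊆ (Yn cy).filter (fun z => cy j' < z) := by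
      intro z hz
      rw [Finset.mem_filter] at hz ⊢
      exact ⟨hz.1, lt_of_le_of_lt h' hz.2⟩
    have := Finset.card_le_card hs
    rw [e, e', abs_neg, abs_neg, abs_of_nonneg (by positivity), abs_of_nonneg (by positivity)]
    omega


end MonRectRepAux


open scoped Classical in
/-- Grid normalization: every planar bipartite incidence structure of a Monotone
3-SAT instance with `v` variables and `c` clauses (each clause with at most three
variables) that admits a monotone rectilinear representation also admits one on an
integer grid with `c + 1` rows and `3c + v` columns: all horizontal segments lie on
at most `c + 1` horizontal integer grid lines (the x-axis and the clause lines, with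
`|y| ≤ c`), and all x-coordinates are integers in `{0, …, 3c + v − 1}`. -/
theorem monotone_rectilinear_on_grid (v c : ℕ)
    (pos : Fin c → Bool) (occ : Fin c → Finset (Fin v))
    (hocc : ∀ j, (occ j).card ≤ 3)
    (h : Nonempty (MonRectRep v c pos occ)) :
    ∃ R : MonRectRep v c pos occ,
      -- clause lines lie on integer horizontal grid lines with |y| ≤ c …
      (∀ j, ∃ k : ℤ, R.cy j = (k : ℝ) ∧ |k| ≤ (c : ℤ)) ∧
      -- … and, together with the x-axis, form at most c + 1 rows
      (insert (0 : ℝ) (Finset.univ.image R.cy)).card ≤ c + 1 ∧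
      -- all x-coordinates are integers in {0, …, 3c + v − 1} (3c + v columns)
      (∀ i, ∃ k : ℤ, R.vl i = (k : ℝ) ∧ 0 ≤ k ∧ k < 3 * (c : ℤ) + v) ∧
      (∀ i, ∃ k : ℤ, R.vr i = (k : ℝ) ∧ 0 ≤ k ∧ k < 3 * (c : ℤ) + v) ∧
      (∀ j, ∃ k : ℤ, R.cl j = (k : ℝ) ∧ 0 ≤ k ∧ k < 3 * (c : ℤ) + v) ∧
      (∀ j, ∃ k : ℤ, R.cr j = (k : ℝ) ∧ 0 ≤ k ∧ k < 3 * (c : ℤ) + v) ∧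
      (∀ j i, i ∈ occ j → ∃ k : ℤ, R.ex j i = (k : ℝ) ∧ 0 ≤ k ∧ k < 3 * (c : ℤ) + v) := by
  
  obtain ⟨R⟩ := h
  open MonRectRepAux in
  have hcy : ∀ j, R.cy j ≠ 0 := by
    intro j
    cases hb : pos j
    · exact ne_of_lt (R.hnegy j hb)
    · exact ne_of_gt (R.hposy j hb)
  refine ⟨{
    vl := fun i => ((sig R (vl2 R i) : ℤ) : ℝ)
    vr := fun i => ((sig R (vr2 R i) : ℤ) : ℝ)
    cy := fun j => ((tau R.cy (R.cy j) : ℤ) : ℝ)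
    cl := fun j => ((sig R (cl2 R j) : ℤ) : ℝ)
    cr := fun j => ((sig R (cr2 R j) : ℤ) : ℝ)
    ex := fun j i => ((sig R (R.ex j i) : ℤ) : ℝ)
    hvlr := fun i => by beta_reduce; exact_mod_cast sig_mono R (vl2_le_vr2 R i)
    hclr := fun j => by beta_reduce; exact_mod_cast sig_mono R (cl2_le_cr2 R j)
    hposy := fun j hb => by beta_reduce; exact_mod_cast tau_pos (cy := R.cy) (R.hposy j hb)
    hnegy := fun j hb => by beta_reduce; exact_mod_cast tau_neg (cy := R.cy) (R.hnegy j hb)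
    hvdisj := by
      intro i i' hne
      rcases R.hvdisj i i' hne with hlt | hlt
      · left
        have : vr2 R i < vl2 R i' :=
          lt_of_le_of_lt (vr2_le_vr R i) (lt_of_lt_of_le hlt (vl_le_vl2 R i'))
        beta_reduce; exact_mod_cast sig_strict R (vr2_mem_X R i) this
      · right
        have : vr2 R i' < vl2 R i :=
          lt_of_le_of_lt (vr2_le_vr R i') (lt_of_lt_of_le hlt (vl_le_vl2 R i))
        beta_reduce; exact_mod_cast sig_strict R (vr2_mem_X R i') this
    hcdisj := by
      intro j j' hne heq
      have heq' : tau R.cy (R.cy j) = tau R.cy (R.cy j') := by beta_reduce at heq; exact_mod_cast heq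
      have hcyeq : R.cy j = R.cy j' := tau_inj (hcy j) (hcy j') heq'
      rcases R.hcdisj j j' hne hcyeq with hlt | hlt
      · left
        have : cr2 R j < cl2 R j' :=
          lt_of_le_of_lt (cr2_le_cr R j) (lt_of_lt_of_le hlt (cl_le_cl2 R j'))
        beta_reduce; exact_mod_cast sig_strict R (cr2_mem_X R j) this
      · right
        have : cr2 R j' < cl2 R j :=
          lt_of_le_of_lt (cr2_le_cr R j') (lt_of_lt_of_le hlt (cl_le_cl2 R j))
        beta_reduce; exact_mod_cast sig_strict R (cr2_mem_X R j') this
    hexv := by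
      intro j i hi
      obtain ⟨h1, h2⟩ := vl2_le_ex R hi
      exact ⟨by beta_reduce; exact_mod_cast sig_mono R h1, by beta_reduce; exact_mod_cast sig_mono R h2⟩
    hexc := by
      intro j i hi
      obtain ⟨h1, h2⟩ := cl2_le_ex R hi
      exact ⟨by beta_reduce; exact_mod_cast sig_mono R h1, by beta_reduce; exact_mod_cast sig_mono R h2⟩
    hedgevar := by
      intro j i hi i' hne
      refine sig_not_between R (vr2_mem_X R i') (ex_mem_X R hi) ?_
      rintro ⟨h1, h2⟩
      exact R.hedgevar j i hi i' hne
        ⟨le_trans (vl_le_vl2 R i') h1, le_trans h2 (vr2_le_vr R i')⟩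
    hedgeclause := by
      intro j i hi j' hne hpp habs
      have habs' : |tau R.cy (R.cy j')| < |tau R.cy (R.cy j)| := by
        have : |((tau R.cy (R.cy j') : ℤ) : ℝ)| < |((tau R.cy (R.cy j) : ℤ) : ℝ)| := habs
        rw [← Int.cast_abs, ← Int.cast_abs] at this
        exact_mod_cast this
      have hcyabs : |R.cy j'| < |R.cy j| := by
        by_contra hc
        push_neg at hc
        have hsame : (0 < R.cy j ∧ 0 < R.cy j') ∨ (R.cy j < 0 ∧ R.cy j' < 0) := by
          cases hb : pos j
          · right; exact ⟨R.hnegy j hb, R.hnegy j' (hpp.trans hb)⟩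
          · left; exact ⟨R.hposy j hb, R.hposy j' (hpp.trans hb)⟩
        exact absurd (tau_abs_mono hsame hc) (not_le.2 habs')
      refine sig_not_between R (cr2_mem_X R j') (ex_mem_X R hi) ?_
      rintro ⟨h1, h2⟩
      exact R.hedgeclause j i hi j' hne hpp hcyabs
        ⟨le_trans (cl_le_cl2 R j') h1, le_trans h2 (cr2_le_cr R j')⟩
    hedgeedge := by
      intro j i j' i' hi hi' hne hpp heq
      exact R.hedgeedge j i j' i' hi hi' hne hpp
        (sig_inj R (ex_mem_X R hi) (ex_mem_X R hi') (by beta_reduce at heq; exact_mod_cast heq))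
    hedgeedge' := by
      intro j i i' hi hi' hne heq
      exact R.hedgeedge' j i i' hi hi' hne
        (sig_inj R (ex_mem_X R hi) (ex_mem_X R hi') (by beta_reduce at heq; exact_mod_cast heq))
    }, ?_, ?_, ?_, ?_, ?_, ?_, ?_⟩
  · exact fun j => ⟨tau R.cy (R.cy j), rfl, tau_abs_le j (hcy j)⟩
  · refine le_trans (Finset.card_insert_le _ _) (Nat.succ_le_succ ?_)
    exact le_trans Finset.card_image_le (by simp)
  · exact fun i => ⟨sig R (vl2 R i), rfl, sig_nonneg R _, sig_lt R hocc (vl2_mem_X R i)⟩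
  · exact fun i => ⟨sig R (vr2 R i), rfl, sig_nonneg R _, sig_lt R hocc (vr2_mem_X R i)⟩
  · exact fun j => ⟨sig R (cl2 R j), rfl, sig_nonneg R _, sig_lt R hocc (cl2_mem_X R j)⟩
  · exact fun j => ⟨sig R (cr2 R j), rfl, sig_nonneg R _, sig_lt R hocc (cr2_mem_X R j)⟩
  · exact fun j i hi => ⟨sig R (R.ex j i), rfl, sig_nonneg R _, sig_lt R hocc (ex_mem_X R hi)⟩
end
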